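/- arXiv:2411.16572 — 2 statements merged into one kernel-verified Lean document; each statement's English description precedes it below -/
import Mathlib

section
/- Let m_j = m^{z_j}(iη_j), u_j = u^{z_j}(iη_j) for j = 1,2 and define β_± := 1 - u₁u₂ Re(z₁z̄₂) ± √s with s := m₁²m₂² - u₁²u₂² (Im(z₁z̄₂))². Then β₊β₋ = u₁u₂|z₁-z₂|² - m₁²(u₂/u₁)(1-u₁) - m₂²(u₁/u₂)(1-u₂) + (1-u₁)(1-u₂). -/
/-!
Both sides are polynomial in `m_j, u_j` and the real numbers `|z_j|²`, `Re(z₁z̄₂)`, `Im(z₁z̄₂)`,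
`|z₁ - z₂|²`. Eliminating `m_j² = u_j²|z_j|² - u_j` (the self-consistent equation multiplied out),
`(Re x)² + (Im x)² = |z₁|²|z₂|²` for `x = z₁z̄₂`, and `|z₁ - z₂|² = |z₁|² + |z₂|² - 2 Re x`
turns the claim into a ring identity.
-/

open ComplexConjugate

theorem sq_eq_of_neg_inv_eq_add_sub_div {K : Type*} [Field K] {a m u r : K} (hm : m ≠ 0) (ha : a + m ≠ 0)
    (heq : -(1 / m) = a + m - r / (a + m)) (hu : u = m / (a + m)) :
    m ^ 2 = u ^ 2 * r - u := by
  subst hu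
  field_simp at heq ⊢
  linear_combination -heq

theorem ne_zero_of_im_mul_pos {m : ℂ} {η : ℝ} (h : m.im * η > 0) : m ≠ 0 := by
  rintro rfl
  simp at h

theorem I_mul_add_ne_zero_of_im_mul_pos {m : ℂ} {η : ℝ} (h : m.im * η > 0) :
    Complex.I * η + m ≠ 0 := by
  intro h0
  have him : η + m.im = 0 := by simpa using congrArg Complex.im h0
  have hmη : m.im = -η := by linarith
  rw [hmη] at h
  nlinarith [sq_nonneg η]

theorem re_sq_add_im_sq_mul_conj (z₁ z₂ : ℂ) :
    (z₁ * conj z₂).re ^ 2 + (z₁ * conj z₂).im ^ 2 = ‖z₁‖ ^ 2 * ‖z₂‖ ^ 2 := by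
  rw [← Complex.sq_norm_sub_sq_re (z₁ * conj z₂), norm_mul, Complex.norm_conj]
  ring

theorem norm_sub_sq_eq_sub_two_re_mul_conj (z₁ z₂ : ℂ) :
    ‖z₁ - z₂‖ ^ 2 = ‖z₁‖ ^ 2 + ‖z₂‖ ^ 2 - 2 * (z₁ * conj z₂).re := by
  simp only [Complex.sq_norm, Complex.normSq_sub]

theorem beta_product_identity {K : Type*} [Field K] {m₁ m₂ u₁ u₂ a₁ a₂ x y d w : K}
    (hu₁ : u₁ ≠ 0) (hu₂ : u₂ ≠ 0)
    (hm₁ : m₁ ^ 2 = u₁ ^ 2 * a₁ - u₁) (hm₂ : m₂ ^ 2 = u₂ ^ 2 * a₂ - u₂)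
    (hxy : x ^ 2 + y ^ 2 = a₁ * a₂) (hd : d = a₁ + a₂ - 2 * x)
    (hw : w ^ 2 = m₁ ^ 2 * m₂ ^ 2 - u₁ ^ 2 * u₂ ^ 2 * y ^ 2) :
    (1 - u₁ * u₂ * x + w) * (1 - u₁ * u₂ * x - w)
      = u₁ * u₂ * d - m₁ ^ 2 * (u₂ / u₁) * (1 - u₁) - m₂ ^ 2 * (u₁ / u₂) * (1 - u₂)
          + (1 - u₁) * (1 - u₂) := by
  have h₁ : m₁ ^ 2 * (u₂ / u₁) = (u₁ * a₁ - 1) * u₂ := by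
    rw [hm₁]; field_simp
  have h₂ : m₂ ^ 2 * (u₁ / u₂) = (u₂ * a₂ - 1) * u₁ := by
    rw [hm₂]; field_simp
  rw [h₁, h₂, hd]
  linear_combination -hw - m₂ ^ 2 * hm₁ - (u₁ ^ 2 * a₁ - u₁) * hm₂ + u₁ ^ 2 * u₂ ^ 2 * hxy

theorem beta_product_formula_general
    (z₁ z₂ : ℂ) (η₁ η₂ : ℝ)
    (m₁ m₂ u₁ u₂ : ℂ)
    (hsign₁ : m₁.im * η₁ > 0) (hsign₂ : m₂.im * η₂ > 0)
    (heq₁ : -(1 / m₁) = Complex.I * η₁ + m₁ - (‖z₁‖ : ℂ) ^ 2 / (Complex.I * η₁ + m₁))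
    (heq₂ : -(1 / m₂) = Complex.I * η₂ + m₂ - (‖z₂‖ : ℂ) ^ 2 / (Complex.I * η₂ + m₂))
    (hu₁ : u₁ = m₁ / (Complex.I * η₁ + m₁))
    (hu₂ : u₂ = m₂ / (Complex.I * η₂ + m₂))
    (w : ℂ)
    (hw : w ^ 2 = m₁ ^ 2 * m₂ ^ 2
        - u₁ ^ 2 * u₂ ^ 2 * (((z₁ * (starRingEnd ℂ) z₂).im : ℂ)) ^ 2) :
    (1 - u₁ * u₂ * ((z₁ * (starRingEnd ℂ) z₂).re : ℂ) + w) *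
        (1 - u₁ * u₂ * ((z₁ * (starRingEnd ℂ) z₂).re : ℂ) - w)
      = u₁ * u₂ * (‖z₁ - z₂‖ : ℂ) ^ 2
          - m₁ ^ 2 * (u₂ / u₁) * (1 - u₁) - m₂ ^ 2 * (u₁ / u₂) * (1 - u₂)
          + (1 - u₁) * (1 - u₂) := by
  have hm₁ := ne_zero_of_im_mul_pos hsign₁
  have hm₂ := ne_zero_of_im_mul_pos hsign₂
  have ha₁ := I_mul_add_ne_zero_of_im_mul_pos hsign₁
  have ha₂ := I_mul_add_ne_zero_of_im_mul_pos hsign₂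
  have hu₁0 : u₁ ≠ 0 := hu₁ ▸ div_ne_zero hm₁ ha₁
  have hu₂0 : u₂ ≠ 0 := hu₂ ▸ div_ne_zero hm₂ ha₂
  refine beta_product_identity hu₁0 hu₂0
    (sq_eq_of_neg_inv_eq_add_sub_div hm₁ ha₁ heq₁ hu₁)
    (sq_eq_of_neg_inv_eq_add_sub_div hm₂ ha₂ heq₂ hu₂) ?_ ?_ hw
  · exact_mod_cast re_sq_add_im_sq_mul_conj z₁ z₂
  · exact_mod_cast norm_sub_sq_eq_sub_two_re_mul_conj z₁ z₂

/-- Product formula for the two non-trivial eigenvalues `β_±` of the two-body stability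
operator: `β₊β₋ = u₁u₂|z₁-z₂|² - m₁²(u₂/u₁)(1-u₁) - m₂²(u₁/u₂)(1-u₂) + (1-u₁)(1-u₂)`. -/
theorem beta_product_formula
    (z₁ z₂ : ℂ) (η₁ η₂ : ℝ) (hη₁ : η₁ ≠ 0) (hη₂ : η₂ ≠ 0)
    (m₁ m₂ u₁ u₂ : ℂ)
    (hsign₁ : m₁.im * η₁ > 0) (hsign₂ : m₂.im * η₂ > 0)
    (heq₁ : -(1 / m₁) = Complex.I * η₁ + m₁ - (‖z₁‖ : ℂ) ^ 2 / (Complex.I * η₁ + m₁))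
    (heq₂ : -(1 / m₂) = Complex.I * η₂ + m₂ - (‖z₂‖ : ℂ) ^ 2 / (Complex.I * η₂ + m₂))
    (hu₁ : u₁ = m₁ / (Complex.I * η₁ + m₁))
    (hu₂ : u₂ = m₂ / (Complex.I * η₂ + m₂))
    (w : ℂ)
    (hw : w ^ 2 = m₁ ^ 2 * m₂ ^ 2
        - u₁ ^ 2 * u₂ ^ 2 * (((z₁ * (starRingEnd ℂ) z₂).im : ℂ)) ^ 2) :
    (1 - u₁ * u₂ * ((z₁ * (starRingEnd ℂ) z₂).re : ℂ) + w) *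
        (1 - u₁ * u₂ * ((z₁ * (starRingEnd ℂ) z₂).re : ℂ) - w)
      = u₁ * u₂ * (‖z₁ - z₂‖ : ℂ) ^ 2
          - m₁ ^ 2 * (u₂ / u₁) * (1 - u₁) - m₂ ^ 2 * (u₁ / u₂) * (1 - u₂)
          + (1 - u₁) * (1 - u₂) :=
  beta_product_formula_general z₁ z₂ η₁ η₂ m₁ m₂ u₁ u₂ hsign₁ hsign₂ heq₁ heq₂ hu₁ hu₂ w hw
end

section
/- For Hermitian H' and any matrices R₁, R₂, the averaged reduction inequality ⟨|G₁| R₁ G₂ R₂ |G₁| R₂* G₂* R₁*⟩ ≤ N ⟨|G₁| R₁ |G₂| R₁*⟩ ⟨|G₁| R₂* |G₂| R₂⟩ holds, where G_i = (H_i - w_i)⁻¹ for Hermitian H_i and non-real w_i, and |G| := (G G*)^{1/2}. -/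
/-!
Write `|G₁| = B Bᴴ`. In an eigenbasis of `H₂` the resolvent is diagonal, `G₂ = U (diag g) Uᴴ`,
so it factors as `G₂ = P Q` with `P Pᴴ = Qᴴ Q = |G₂|` by splitting each eigenvalue as
`g = √|g| · √|g| e^{i arg g}`. For `X = Bᴴ R₁ P` and `Y = Q R₂ B` the left side is `‖X Y‖²` in the
Frobenius norm and the right side is `‖X‖² ‖Y‖²`, so the inequality is the submultiplicativity of
the Frobenius norm, i.e. Cauchy–Schwarz.
-/

open Matrix
open scoped ComplexOrder

/-- The old Mathlib `Matrix.PosSemidef.sqrt` (removed upstream), with its original definition. -/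
noncomputable def Matrix.PosSemidef.sqrt {n : Type*} [Fintype n] [DecidableEq n]
    {A : Matrix n n ℂ} (hA : A.PosSemidef) : Matrix n n ℂ :=
  hA.1.eigenvectorUnitary.1 * diagonal ((↑) ∘ (√·) ∘ hA.1.eigenvalues) *
    (star hA.1.eigenvectorUnitary : Matrix n n ℂ)

open Unitary

lemma Complex.exists_mul_eq_and_mul_conj_eq_norm (z : ℂ) :
    ∃ p q : ℂ, p * q = z ∧ p * starRingEnd ℂ p = ‖z‖ ∧ starRingEnd ℂ q * q = ‖z‖ := by
  refine ⟨√‖z‖, √‖z‖ * exp (z.arg * I), ?_, ?_, ?_⟩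
  · rw [← mul_assoc, ← ofReal_mul, Real.mul_self_sqrt (norm_nonneg z), norm_mul_exp_arg_mul_I]
  · rw [conj_ofReal, ← ofReal_mul, Real.mul_self_sqrt (norm_nonneg z)]
  · rw [mul_comm, mul_conj, normSq_eq_norm_sq, norm_mul, norm_exp_ofReal_mul_I]
    simp

lemma Complex.re_inv_natCast_mul_le {N : ℕ} {a b c : ℂ} (h : a.re ≤ b.re * c.re) :
    ((N : ℂ)⁻¹ * a).re ≤ N * ((N : ℂ)⁻¹ * b).re * ((N : ℂ)⁻¹ * c).re := by
  simp only [← ofReal_natCast, ← ofReal_inv, re_ofReal_mul]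
  rcases N.eq_zero_or_pos with rfl | hN
  · simp
  · have hN : (N : ℝ) ≠ 0 := by positivity
    calc (N : ℝ)⁻¹ * a.re ≤ (N : ℝ)⁻¹ * (b.re * c.re) := by gcongr
      _ = N * ((N : ℝ)⁻¹ * b.re) * ((N : ℝ)⁻¹ * c.re) := by field_simp

namespace Matrix

section Frobenius

attribute [local instance] frobeniusNormedAddCommGroup

variable {𝕜 l m n : Type*} [RCLike 𝕜] [Fintype l] [Fintype m] [Fintype n]

lemma frobenius_norm_sq_eq_re_trace (A : Matrix m n 𝕜) :
    ‖A‖ ^ 2 = RCLike.re (A * Aᴴ).trace := by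
  rw [frobenius_norm_def, ← Real.sqrt_eq_rpow, Real.sq_sqrt (by positivity)]
  simp only [trace, diag, mul_apply, conjTranspose_apply, map_sum, RCLike.star_def,
    RCLike.mul_conj]
  norm_cast

lemma re_trace_mul_mul_conjTranspose_le (X : Matrix l m 𝕜) (Y : Matrix m n 𝕜) :
    RCLike.re ((X * Y) * (X * Y)ᴴ).trace ≤
      RCLike.re (X * Xᴴ).trace * RCLike.re (Y * Yᴴ).trace := by
  simp only [← frobenius_norm_sq_eq_re_trace, ← mul_pow]
  exact pow_le_pow_left₀ (norm_nonneg _) (frobenius_norm_mul X Y) 2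

end Frobenius

theorem re_trace_sandwich_le {𝕜 n : Type*} [RCLike 𝕜] [Fintype n]
    {A G S : Matrix n n 𝕜} (B P Q R₁ R₂ : Matrix n n 𝕜)
    (hA : B * Bᴴ = A) (hG : P * Q = G) (hP : P * Pᴴ = S) (hQ : Qᴴ * Q = S) :
    RCLike.re (A * R₁ * G * R₂ * A * R₂ᴴ * Gᴴ * R₁ᴴ).trace ≤
      RCLike.re (A * R₁ * S * R₁ᴴ).trace * RCLike.re (A * R₂ᴴ * S * R₂).trace := by
  subst hA hG hP
  have hXY : ((Bᴴ * R₁ * P * (Q * R₂ * B)) * (Bᴴ * R₁ * P * (Q * R₂ * B))ᴴ).trace =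
      (B * Bᴴ * R₁ * (P * Q) * R₂ * (B * Bᴴ) * R₂ᴴ * (P * Q)ᴴ * R₁ᴴ).trace := by
    simp only [conjTranspose_mul, conjTranspose_conjTranspose, ← Matrix.mul_assoc]
    rw [trace_mul_comm]
    simp only [← Matrix.mul_assoc]
  have hX : ((Bᴴ * R₁ * P) * (Bᴴ * R₁ * P)ᴴ).trace = (B * Bᴴ * R₁ * (P * Pᴴ) * R₁ᴴ).trace := by
    simp only [conjTranspose_mul, conjTranspose_conjTranspose, ← Matrix.mul_assoc]
    rw [trace_mul_comm]
    simp only [← Matrix.mul_assoc]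
  have hY : ((Q * R₂ * B) * (Q * R₂ * B)ᴴ).trace = (B * Bᴴ * R₂ᴴ * (Qᴴ * Q) * R₂).trace := by
    simp only [conjTranspose_mul, Matrix.mul_assoc]
    rw [trace_mul_comm Q]
    simp only [Matrix.mul_assoc]
    rw [trace_mul_comm R₂]
    simp only [Matrix.mul_assoc]
  rw [← hXY, ← hX, ← hQ, ← hY]
  exact re_trace_mul_mul_conjTranspose_le _ _

variable {n : Type*} [Fintype n] [DecidableEq n]

section UnitaryConj

variable (U : unitary (Matrix n n ℂ))

lemma conjStarAlgAut_diagonal_mul (f g : n → ℂ) :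
    conjStarAlgAut ℂ _ U (diagonal f) * conjStarAlgAut ℂ _ U (diagonal g) =
      conjStarAlgAut ℂ _ U (diagonal (f * g)) := by
  rw [← map_mul, diagonal_mul_diagonal]
  rfl

lemma conjTranspose_conjStarAlgAut_diagonal (f : n → ℂ) :
    (conjStarAlgAut ℂ _ U (diagonal f))ᴴ = conjStarAlgAut ℂ _ U (diagonal (star f)) := by
  rw [← star_eq_conjTranspose, ← map_star, star_eq_conjTranspose, diagonal_conjTranspose]

lemma posSemidef_conjStarAlgAut_diagonal {d : n → ℂ} (hd : ∀ i, 0 ≤ d i) :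
    (conjStarAlgAut ℂ _ U (diagonal d)).PosSemidef := by
  simpa [star_eq_conjTranspose] using
    (posSemidef_diagonal_iff.2 hd).mul_mul_conjTranspose_same (U : Matrix n n ℂ)

lemma conjStarAlgAut_nonsing_inv (M : Matrix n n ℂ) :
    (conjStarAlgAut ℂ _ U M)⁻¹ = conjStarAlgAut ℂ _ U M⁻¹ := by
  have hU : (U : Matrix n n ℂ)⁻¹ = star (U : Matrix n n ℂ) :=
    inv_eq_left_inv (star_mul_self_of_mem U.prop)
  have hU' : (star (U : Matrix n n ℂ))⁻¹ = U := inv_eq_left_inv (mul_star_self_of_mem U.prop)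
  simp only [conjStarAlgAut_apply, mul_inv_rev, hU, hU', Matrix.mul_assoc]

end UnitaryConj

namespace PosSemidef

variable {A : Matrix n n ℂ} (hA : A.PosSemidef)
include hA

lemma sqrt_eq_cfc : hA.sqrt = cfc Real.sqrt A := by
  rw [hA.1.cfc_eq]
  simp [IsHermitian.cfc, PosSemidef.sqrt]

lemma nonneg_of_mem_spectrum {x : ℝ} (hx : x ∈ spectrum ℝ A) : 0 ≤ x := by
  rw [hA.1.spectrum_real_eq_range_eigenvalues] at hx
  obtain ⟨i, rfl⟩ := hx
  exact hA.eigenvalues_nonneg i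

lemma posSemidef_sqrt : hA.sqrt.PosSemidef := by
  have := posSemidef_conjStarAlgAut_diagonal hA.1.eigenvectorUnitary
    (d := fun i ↦ (√(hA.1.eigenvalues i) : ℂ)) fun i ↦ Complex.zero_le_real.2 (Real.sqrt_nonneg _)
  rw [conjStarAlgAut_apply] at this
  exact this

lemma sqrt_mul_self : hA.sqrt * hA.sqrt = A := by
  have hA' : IsSelfAdjoint A := hA.1
  rw [hA.sqrt_eq_cfc, ← cfc_mul Real.sqrt Real.sqrt A]
  conv_rhs => rw [← cfc_id' ℝ A]
  exact cfc_congr fun x hx ↦ Real.mul_self_sqrt (hA.nonneg_of_mem_spectrum hx)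

lemma sqrt_mul_conjTranspose_sqrt : hA.sqrt * hA.sqrtᴴ = A := by
  rw [hA.posSemidef_sqrt.1, hA.sqrt_mul_self]

lemma sqrt_eq_of_mul_self_eq {C : Matrix n n ℂ} (hC : C.PosSemidef) (h : C * C = A) :
    hA.sqrt = C := by
  have hC' : IsSelfAdjoint C := hC.1
  have hCC : C * C = cfc (fun x : ℝ ↦ x * x) C := by
    rw [cfc_mul (fun x : ℝ ↦ x) (fun x : ℝ ↦ x) C, cfc_id' ℝ C]
  rw [hA.sqrt_eq_cfc, ← h, hCC, ← cfc_comp Real.sqrt (fun x : ℝ ↦ x * x) C]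
  conv_rhs => rw [← cfc_id' ℝ C]
  exact cfc_congr fun x hx ↦ Real.sqrt_mul_self (hC.nonneg_of_mem_spectrum hx)

end PosSemidef

lemma sqrt_self_mul_conjTranspose_conjStarAlgAut_diagonal (U : unitary (Matrix n n ℂ))
    (g : n → ℂ) :
    (posSemidef_self_mul_conjTranspose (conjStarAlgAut ℂ _ U (diagonal g))).sqrt =
      conjStarAlgAut ℂ _ U (diagonal fun i ↦ (‖g i‖ : ℂ)) := by
  refine PosSemidef.sqrt_eq_of_mul_self_eq _
    (posSemidef_conjStarAlgAut_diagonal U fun i ↦ Complex.zero_le_real.2 (norm_nonneg _)) ?_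
  simp only [conjTranspose_conjStarAlgAut_diagonal, conjStarAlgAut_diagonal_mul]
  congr 2 with i
  simp only [Pi.mul_apply, Pi.star_apply, Complex.star_def, Complex.mul_conj,
    Complex.normSq_eq_norm_sq]
  push_cast
  ring

lemma exists_mul_eq_conjStarAlgAut_diagonal (U : unitary (Matrix n n ℂ)) (g : n → ℂ) :
    ∃ P Q : Matrix n n ℂ, P * Q = conjStarAlgAut ℂ _ U (diagonal g) ∧
      P * Pᴴ = conjStarAlgAut ℂ _ U (diagonal fun i ↦ (‖g i‖ : ℂ)) ∧
      Qᴴ * Q = conjStarAlgAut ℂ _ U (diagonal fun i ↦ (‖g i‖ : ℂ)) := by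
  choose p q hpq hp hq using fun i ↦ Complex.exists_mul_eq_and_mul_conj_eq_norm (g i)
  refine ⟨conjStarAlgAut ℂ _ U (diagonal p), conjStarAlgAut ℂ _ U (diagonal q), ?_, ?_, ?_⟩ <;>
    simp only [conjTranspose_conjStarAlgAut_diagonal, conjStarAlgAut_diagonal_mul] <;>
    congr with i
  exacts [hpq i, hp i, hq i]

lemma IsHermitian.sub_smul_one_eq {H : Matrix n n ℂ} (hH : H.IsHermitian) (w : ℂ) :
    H - w • 1 = conjStarAlgAut ℂ _ hH.eigenvectorUnitary
      (diagonal fun i ↦ (hH.eigenvalues i : ℂ) - w) := by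
  conv_lhs => rw [hH.spectral_theorem]
  rw [← diagonal_sub, ← smul_one_eq_diagonal, map_sub, map_smul, map_one]
  rfl

lemma IsHermitian.exists_inv_sub_smul_one_eq {H : Matrix n n ℂ} (hH : H.IsHermitian) (w : ℂ) :
    ∃ g : n → ℂ, (H - w • 1)⁻¹ = conjStarAlgAut ℂ _ hH.eigenvectorUnitary (diagonal g) := by
  rw [hH.sub_smul_one_eq, conjStarAlgAut_nonsing_inv, inv_diagonal]
  exact ⟨_, rfl⟩

end Matrix

theorem averaged_reduction_inequality_general
    (N : ℕ) (H₁ H₂ : Matrix (Fin N) (Fin N) ℂ)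
    (hH₂ : H₂.IsHermitian)
    (w₁ w₂ : ℂ)
    (R₁ R₂ : Matrix (Fin N) (Fin N) ℂ) :
    let G₁ := (H₁ - w₁ • 1)⁻¹
    let G₂ := (H₂ - w₂ • 1)⁻¹
    let absG₁ := Matrix.PosSemidef.sqrt (Matrix.posSemidef_self_mul_conjTranspose G₁)
    let absG₂ := Matrix.PosSemidef.sqrt (Matrix.posSemidef_self_mul_conjTranspose G₂)
    (((N : ℂ)⁻¹ * (absG₁ * R₁ * G₂ * R₂ * absG₁ * R₂ᴴ * G₂ᴴ * R₁ᴴ).trace).re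
      ≤ N * (((N : ℂ)⁻¹ * (absG₁ * R₁ * absG₂ * R₁ᴴ).trace).re) *
          (((N : ℂ)⁻¹ * (absG₁ * R₂ᴴ * absG₂ * R₂).trace).re)) := by
  intro G₁ G₂ absG₁ absG₂
  obtain ⟨g, hg⟩ := hH₂.exists_inv_sub_smul_one_eq w₂
  obtain ⟨P, Q, hPQ, hP, hQ⟩ := exists_mul_eq_conjStarAlgAut_diagonal hH₂.eigenvectorUnitary g
  have habsG₂ : absG₂ = conjStarAlgAut ℂ _ hH₂.eigenvectorUnitary
      (diagonal fun i ↦ (‖g i‖ : ℂ)) := by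
    have h := sqrt_self_mul_conjTranspose_conjStarAlgAut_diagonal hH₂.eigenvectorUnitary g
    rwa [← hg] at h
  have habsG₁ : absG₁.PosSemidef := PosSemidef.posSemidef_sqrt _
  rw [← hg] at hPQ
  rw [← habsG₂] at hP hQ
  exact Complex.re_inv_natCast_mul_le <| re_trace_sandwich_le habsG₁.sqrt P Q R₁ R₂
    habsG₁.sqrt_mul_conjTranspose_sqrt hPQ hP hQ

/-- Averaged reduction inequality:
`⟨|G₁| R₁ G₂ R₂ |G₁| R₂* G₂* R₁*⟩ ≤ N ⟨|G₁| R₁ |G₂| R₁*⟩ ⟨|G₁| R₂* |G₂| R₂⟩`,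
where `G_i = (H_i - w_i)⁻¹` for Hermitian `H_i`, non-real `w_i`, and `|G| = (G G*)^{1/2}`. -/
theorem averaged_reduction_inequality
    (N : ℕ) (H₁ H₂ : Matrix (Fin N) (Fin N) ℂ)
    (hH₁ : H₁.IsHermitian) (hH₂ : H₂.IsHermitian)
    (w₁ w₂ : ℂ) (hw₁ : w₁.im ≠ 0) (hw₂ : w₂.im ≠ 0)
    (R₁ R₂ : Matrix (Fin N) (Fin N) ℂ) :
    let G₁ := (H₁ - w₁ • 1)⁻¹
    let G₂ := (H₂ - w₂ • 1)⁻¹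
    let absG₁ := Matrix.PosSemidef.sqrt (Matrix.posSemidef_self_mul_conjTranspose G₁)
    let absG₂ := Matrix.PosSemidef.sqrt (Matrix.posSemidef_self_mul_conjTranspose G₂)
    (((N : ℂ)⁻¹ * (absG₁ * R₁ * G₂ * R₂ * absG₁ * R₂ᴴ * G₂ᴴ * R₁ᴴ).trace).re
      ≤ N * (((N : ℂ)⁻¹ * (absG₁ * R₁ * absG₂ * R₁ᴴ).trace).re) *
          (((N : ℂ)⁻¹ * (absG₁ * R₂ᴴ * absG₂ * R₂).trace).re)) :=
  averaged_reduction_inequality_general N H₁ H₂ hH₂ w₁ w₂ R₁ R₂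
end
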